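/- arXiv:1103.3488 — 2 statements merged into one kernel-verified Lean document; each statement's English description precedes it below -/
import Mathlib

section
/- For every U ⊆ [n], the set A_U(n) is a (0,1)-sublattice of the permutohedron P(n): the meet in A_U(n) of two elements is their intersection, and the join is the transitive closure of their union, which coincide with meet and join computed in P(n). -/
/-- `J_n = {(i,j) : 1 ≤ i < j ≤ n}`. -/
def JnS (n : ℕ) : Set (ℕ × ℕ) := {p | 1 ≤ p.1 ∧ p.1 < p.2 ∧ p.2 ≤ n}

/-- Transitivity of a set of pairs, viewed as a binary relation. -/
def TransSet (x : Set (ℕ × ℕ)) : Prop := ∀ i j k : ℕ, (i, j) ∈ x → (j, k) ∈ x → (i, k) ∈ x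

/-- A subset of `J_n` is closed if it is transitive. -/
def ClosedIn (n : ℕ) (x : Set (ℕ × ℕ)) : Prop := x ⊆ JnS n ∧ TransSet x

/-- A subset of `J_n` is clopen if both it and its complement in `J_n` are closed. -/
def ClopenIn (n : ℕ) (x : Set (ℕ × ℕ)) : Prop := ClosedIn n x ∧ ClosedIn n (JnS n \ x)

/-- The transitive closure of a set of pairs. -/
def clS (x : Set (ℕ × ℕ)) : Set (ℕ × ℕ) :=
  {p | Relation.TransGen (fun a b => (a, b) ∈ x) p.1 p.2}

/-- The interior: the largest open subset of `x`. -/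
def intS (n : ℕ) (x : Set (ℕ × ℕ)) : Set (ℕ × ℕ) := JnS n \ clS (JnS n \ x)

/-- `A_U(n)`: transitive subsets `x ⊆ J_n` such that whenever `i < j < k` and
`(i,k) ∈ x`, then `(i,j) ∈ x` if `j ∈ U` and `(j,k) ∈ x` if `j ∉ U`. -/
def AUset (n : ℕ) (U : Set ℕ) (x : Set (ℕ × ℕ)) : Prop :=
  (x ⊆ JnS n ∧ ∀ i j k : ℕ, i < j → j < k → (i, k) ∈ x →
    ((j ∈ U → (i, j) ∈ x) ∧ (j ∉ U → (j, k) ∈ x))) ∧ TransSet x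

/-!
The defining condition of `A_U(n)` passes to intersections and unions, and also to transitive
closures: along a chain `i = m₀ → m₁ → ⋯ → k`, a point `j` strictly between `i` and `k` lies in
some link `mₜ < j < mₜ₊₁` or is a node, and the condition on that one link yields the required
pair. The same condition makes the complement `J_n \ x` transitive, so `x` is clopen and its own
interior.
-/

def UCondition (U : Set ℕ) (x : Set (ℕ × ℕ)) : Prop :=
  ∀ i j k : ℕ, i < j → j < k → (i, k) ∈ x → (j ∈ U → (i, j) ∈ x) ∧ (j ∉ U → (j, k) ∈ x)

lemma mem_clS {x : Set (ℕ × ℕ)} {i k : ℕ} :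
    (i, k) ∈ clS x ↔ Relation.TransGen (fun a b => (a, b) ∈ x) i k :=
  Iff.rfl

lemma subset_clS (x : Set (ℕ × ℕ)) : x ⊆ clS x :=
  fun _ h => Relation.TransGen.single h

lemma transSet_clS (x : Set (ℕ × ℕ)) : TransSet (clS x) :=
  fun _ _ _ => Relation.TransGen.trans

lemma clS_subset {x t : Set (ℕ × ℕ)} (hxt : x ⊆ t) (ht : TransSet t) : clS x ⊆ t := by
  rintro ⟨a, b⟩ h
  replace h := mem_clS.mp h
  induction h with
  | single hab => exact hxt hab
  | tail _ hcd ih => exact ht _ _ _ ih (hxt hcd)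

lemma transSet_JnS (n : ℕ) : TransSet (JnS n) :=
  fun _ _ _ hij hjk => ⟨hij.1, hij.2.1.trans hjk.2.1, hjk.2.2⟩

lemma intS_eq_self {n : ℕ} {x : Set (ℕ × ℕ)} (hx : x ⊆ JnS n) (hc : TransSet (JnS n \ x)) :
    intS n x = x := by
  rw [intS, (clS_subset subset_rfl hc).antisymm (subset_clS _), Set.sdiff_sdiff_cancel_left hx]

namespace UCondition

variable {U : Set ℕ} {x y : Set (ℕ × ℕ)}

lemma transSet_diff (hx : UCondition U x) (n : ℕ) : TransSet (JnS n \ x) := by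
  intro i j k hij hjk
  refine ⟨transSet_JnS n _ _ _ hij.1 hjk.1, fun hik => ?_⟩
  have h := hx i j k hij.1.2.1 hjk.1.2.1 hik
  by_cases hj : j ∈ U
  · exact hij.2 (h.1 hj)
  · exact hjk.2 (h.2 hj)

lemma inter (hx : UCondition U x) (hy : UCondition U y) : UCondition U (x ∩ y) := by
  intro i j k hij hjk hik
  have h₁ := hx i j k hij hjk hik.1
  have h₂ := hy i j k hij hjk hik.2
  exact ⟨fun hj => ⟨h₁.1 hj, h₂.1 hj⟩, fun hj => ⟨h₁.2 hj, h₂.2 hj⟩⟩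

lemma union (hx : UCondition U x) (hy : UCondition U y) : UCondition U (x ∪ y) := by
  rintro i j k hij hjk (hik | hik)
  · exact (hx i j k hij hjk hik).imp (fun h hj => .inl (h hj)) (fun h hj => .inl (h hj))
  · exact (hy i j k hij hjk hik).imp (fun h hj => .inr (h hj)) (fun h hj => .inr (h hj))

lemma clS (hx : UCondition U x) : UCondition U (clS x) := by
  intro i j k hij hjk hik
  replace hik := mem_clS.mp hik
  induction hik using Relation.TransGen.head_induction_on generalizing j with
  | single hik =>
    exact (hx _ j _ hij hjk hik).imp (fun h hj => subset_clS x (h hj))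
      (fun h hj => subset_clS x (h hj))
  | @head i m him hmk ih =>
    rcases lt_trichotomy j m with hjm | rfl | hjm
    · exact (hx _ j _ hij hjm him).imp (fun h hj => subset_clS x (h hj))
        (fun h hj => Relation.TransGen.head (h hj) hmk)
    · exact ⟨fun _ => subset_clS x him, fun _ => hmk⟩
    · exact (ih j hjm hjk).imp (fun h hj => Relation.TransGen.head him (h hj)) id

end UCondition

namespace AUset

variable {n : ℕ} {U : Set ℕ} {x y : Set (ℕ × ℕ)}

lemma uCondition (hx : AUset n U x) : UCondition U x := hx.1.2

lemma clopenIn (hx : AUset n U x) : ClopenIn n x :=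
  ⟨⟨hx.1.1, hx.2⟩, Set.sdiff_subset, hx.uCondition.transSet_diff n⟩

lemma intS_eq (hx : AUset n U x) : intS n x = x :=
  intS_eq_self hx.1.1 (hx.uCondition.transSet_diff n)

lemma inter (hx : AUset n U x) (hy : AUset n U y) : AUset n U (x ∩ y) :=
  ⟨⟨Set.inter_subset_left.trans hx.1.1, hx.uCondition.inter hy.uCondition⟩,
    fun i j k hij hjk => ⟨hx.2 i j k hij.1 hjk.1, hy.2 i j k hij.2 hjk.2⟩⟩

lemma clS_union (hx : AUset n U x) (hy : AUset n U y) : AUset n U (clS (x ∪ y)) :=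
  ⟨⟨clS_subset (Set.union_subset hx.1.1 hy.1.1) (transSet_JnS n),
    (hx.uCondition.union hy.uCondition).clS⟩, transSet_clS _⟩

end AUset

lemma aUset_empty (n : ℕ) (U : Set ℕ) : AUset n U ∅ :=
  ⟨⟨Set.empty_subset _, fun _ _ _ _ _ h => h.elim⟩, fun _ _ _ h => h.elim⟩

lemma aUset_JnS (n : ℕ) (U : Set ℕ) : AUset n U (JnS n) := by
  refine ⟨⟨subset_rfl, fun i j k hij hjk hik => ⟨fun _ => ?_, fun _ => ?_⟩⟩, transSet_JnS n⟩
  · exact ⟨hik.1, hij, hjk.le.trans hik.2.2⟩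
  · exact ⟨hik.1.trans hij.le, hjk, hik.2.2⟩

/-- `A_U(n)` is a `(0,1)`-sublattice of the permutohedron `P(n)`: its elements are clopen,
it contains the bottom `∅` and the top `J_n`, it is closed under the meet `x ∩ y` and
the join `cl (x ∪ y)` of `P(n)`, and on `A_U(n)` the meet of `P(n)` is intersection
(`int (x ∩ y) = x ∩ y`) while the join is the transitive closure of the union. -/
theorem stmt9 (n : ℕ) (U : Set ℕ) :
    (∀ x, AUset n U x → ClopenIn n x) ∧
    AUset n U ∅ ∧ AUset n U (JnS n) ∧
    (∀ x y, AUset n U x → AUset n U y →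
      AUset n U (x ∩ y) ∧ intS n (x ∩ y) = x ∩ y ∧ AUset n U (clS (x ∪ y))) :=
  ⟨fun _ hx => hx.clopenIn, aUset_empty n U, aUset_JnS n U,
    fun _ _ hx hy => ⟨hx.inter hy, (hx.inter hy).intS_eq, hx.clS_union hy⟩⟩
end

section
/- Let U ⊆ [n], L a finite lattice, and let μ : J_n → L and φ : L → A_U(n) be dual, meaning (x,y) ∈ φ(a) iff μ(x,y) ≤ a for all (x,y) ∈ J_n and a ∈ L. Then: (i) the range of μ generates L as a (∨,0)-semilattice if and only if φ is injective; (ii) μ satisfies the V-condition—whenever μ(x,y) ≤ a ∨ b there is a subdivision x = z₀ < z₁ < ⋯ < z_m = y with each μ(zᵢ,zᵢ₊₁) ≤ a or ≤ b—if and only if φ is a lattice homomorphism. -/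
theorem JnS_finite (n : ℕ) : (JnS n).Finite :=
  ((Set.finite_Iic n).prod (Set.finite_Iic n)).subset fun _ hp => ⟨hp.2.1.le.trans hp.2.2, hp.2.2⟩

theorem mem_JnS_of_le {n x y u v : ℕ} (hxy : (x, y) ∈ JnS n) (hxu : x ≤ u) (huv : u < v)
    (hvy : v ≤ y) : (u, v) ∈ JnS n :=
  ⟨hxy.1.trans hxu, huv, hvy.trans hxy.2.2⟩

section Subdivision

def HasSubdivision (R : ℕ → ℕ → Prop) (x y : ℕ) : Prop :=
  ∃ (m : ℕ) (z : ℕ → ℕ), 0 < m ∧ z 0 = x ∧ z m = y ∧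
    (∀ i < m, z i < z (i + 1)) ∧ ∀ i < m, R (z i) (z (i + 1))

variable {R R' : ℕ → ℕ → Prop} {x y w : ℕ}

theorem HasSubdivision.single (hxy : x < y) (hR : R x y) : HasSubdivision R x y :=
  ⟨1, fun i => if i = 0 then x else y, one_pos, rfl, rfl, fun i hi => by simp_all,
    fun i hi => by simp_all⟩

theorem HasSubdivision.tail (h : HasSubdivision R x y) (hyw : y < w) (hR : R y w) :
    HasSubdivision R x w := by
  obtain ⟨m, z, hm, hz0, hzm, hlt, hstep⟩ := h
  let z' := Function.update z (m + 1) w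
  have hz' : ∀ i ≤ m, z' i = z i := fun i hi => Function.update_of_ne (by omega) _ _
  have hlast : z' m = y ∧ z' (m + 1) = w := ⟨(hz' m le_rfl).trans hzm, by simp [z']⟩
  have hsteps : ∀ i < m + 1, z' i < z' (i + 1) ∧ R (z' i) (z' (i + 1)) := by
    intro i hi
    rcases Nat.lt_succ_iff_lt_or_eq.1 hi with hi | rfl
    · rw [hz' i hi.le, hz' (i + 1) hi]
      exact ⟨hlt i hi, hstep i hi⟩
    · rw [hlast.1, hlast.2]
      exact ⟨hyw, hR⟩
  exact ⟨m + 1, z', m.succ_pos, (hz' 0 m.zero_le).trans hz0, hlast.2,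
    fun i hi => (hsteps i hi).1, fun i hi => (hsteps i hi).2⟩

theorem HasSubdivision.transGen (h : HasSubdivision R x y) : Relation.TransGen R x y := by
  obtain ⟨m, z, hm, rfl, rfl, -, hstep⟩ := h
  obtain ⟨k, rfl⟩ := Nat.exists_eq_add_of_lt hm
  induction k with
  | zero => exact .single (hstep 0 (by omega))
  | succ k ih => exact .tail (ih (by omega) fun i hi => hstep i (by omega)) (hstep _ (by omega))

theorem hasSubdivision_iff_transGen (hR : ∀ u v, R u v → u < v) :
    HasSubdivision R x y ↔ Relation.TransGen R x y := by
  refine ⟨HasSubdivision.transGen, fun h => ?_⟩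
  induction h with
  | single h => exact .single (hR _ _ h) h
  | tail _ h ih => exact ih.tail (hR _ _ h) h

theorem HasSubdivision.mono (h : HasSubdivision R x y)
    (hRR' : ∀ u v, x ≤ u → u < v → v ≤ y → R u v → R' u v) : HasSubdivision R' x y := by
  obtain ⟨m, z, hm, hz0, hzm, hlt, hstep⟩ := h
  have hz : MonotoneOn z (Set.Iic m) :=
    (strictMonoOn_Iic_of_lt_succ fun i hi => by simpa using hlt i hi).monotoneOn
  refine ⟨m, z, hm, hz0, hzm, hlt, fun i hi => hRR' _ _ ?_ (hlt i hi) ?_ (hstep i hi)⟩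
  · exact hz0 ▸ hz (Set.mem_Iic.2 (Nat.zero_le m)) (Set.mem_Iic.2 hi.le) (Nat.zero_le i)
  · exact hzm ▸ hz (Set.mem_Iic.2 hi) (Set.mem_Iic.2 le_rfl) hi

end Subdivision

theorem clS_subset_of_subset {x y : Set (ℕ × ℕ)} (hy : TransSet y) (hxy : x ⊆ y) : clS x ⊆ y := by
  rintro ⟨u, v⟩ (huv : Relation.TransGen _ u v)
  induction huv with
  | single h => exact hxy h
  | tail _ h ih => exact hy _ _ _ ih (hxy h)

section DualMap

variable {α L : Type*}

def dualMap [LE L] (J : Set α) (μ : α → L) (a : L) : Set α := {p | p ∈ J ∧ μ p ≤ a}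

variable {J : Set α} {μ : α → L}

theorem eq_dualMap [LE L] {φ : L → Set α} (hsub : ∀ a, φ a ⊆ J)
    (hdual : ∀ p ∈ J, ∀ a, p ∈ φ a ↔ μ p ≤ a) : φ = dualMap J μ := by
  ext a p
  exact ⟨fun hp => ⟨hsub a hp, (hdual p (hsub a hp) a).1 hp⟩, fun hp => (hdual p hp.1 a).2 hp.2⟩

theorem dualMap_mono [Preorder L] : Monotone (dualMap J μ) :=
  fun _ _ hab _ hp => ⟨hp.1, hp.2.trans hab⟩

theorem dualMap_inf [SemilatticeInf L] (a b : L) :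
    dualMap J μ (a ⊓ b) = dualMap J μ a ∩ dualMap J μ b := by
  simp only [dualMap, le_inf_iff, Set.sep_and]

theorem sup_le_of_dualMap_subset [SemilatticeSup L] [OrderBot L] {S : Finset α} (hS : ↑S ⊆ J)
    {d : L} (h : dualMap J μ (S.sup μ) ⊆ dualMap J μ d) : S.sup μ ≤ d :=
  Finset.sup_le fun _ hp => (h ⟨hS hp, Finset.le_sup hp⟩).2

/-- The join of the finitely many values of `μ` below `c` has the same dual as `c`. -/
theorem exists_sup_eq_of_dualMap_injective [SemilatticeSup L] [OrderBot L] (hJ : J.Finite)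
    (hinj : Function.Injective (dualMap J μ)) (c : L) : ∃ S : Finset α, ↑S ⊆ J ∧ c = S.sup μ := by
  classical
  let S := hJ.toFinset.filter (μ · ≤ c)
  have hS : ↑S ⊆ J := fun p hp => hJ.mem_toFinset.1 (Finset.mem_filter.1 hp).1
  have hsup : S.sup μ ≤ c := Finset.sup_le fun p hp => (Finset.mem_filter.1 hp).2
  refine ⟨S, hS, hinj (le_antisymm (fun p hp => ⟨hp.1, Finset.le_sup ?_⟩) (dualMap_mono hsup))⟩
  exact Finset.mem_filter.2 ⟨hJ.mem_toFinset.2 hp.1, hp.2⟩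

theorem dualMap_injective_iff [SemilatticeSup L] [OrderBot L] (hJ : J.Finite) :
    Function.Injective (dualMap J μ) ↔ ∀ c : L, ∃ S : Finset α, ↑S ⊆ J ∧ c = S.sup μ := by
  refine ⟨exists_sup_eq_of_dualMap_injective hJ, fun hgen => ?_⟩
  have hle : ∀ c d, dualMap J μ c = dualMap J μ d → c ≤ d := fun c d hcd => by
    obtain ⟨S, hS, rfl⟩ := hgen c
    exact sup_le_of_dualMap_subset hS hcd.le
  exact fun c d hcd => le_antisymm (hle c d hcd) (hle d c hcd.symm)

end DualMap

section VCondition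

variable {L : Type*} [Lattice L] {n : ℕ} {μ : ℕ × ℕ → L}

/-- The steps of a subdivision of a pair in `J_n` lie in `J_n`, where `μ ≤ a` means membership
in the dual of `a`. -/
theorem hasSubdivision_union_iff {p : ℕ × ℕ} (hp : p ∈ JnS n) (a b : L) :
    HasSubdivision (fun u v => μ (u, v) ≤ a ∨ μ (u, v) ≤ b) p.1 p.2 ↔
      p ∈ clS (dualMap (JnS n) μ a ∪ dualMap (JnS n) μ b) := by
  refine Iff.trans ?_ (hasSubdivision_iff_transGen fun u v huv => by
    rcases huv with huv | huv <;> exact huv.1.2.1)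
  refine ⟨fun h => h.mono fun u v hxu huv hvy hR => ?_, fun h => h.mono fun u v _ _ _ hR => ?_⟩
  · have huvJ := mem_JnS_of_le hp hxu huv hvy
    exact hR.imp (⟨huvJ, ·⟩) (⟨huvJ, ·⟩)
  · exact hR.imp And.right And.right

theorem vCondition_iff_dualMap_sup_eq (htr : ∀ a, TransSet (dualMap (JnS n) μ a)) :
    (∀ p ∈ JnS n, ∀ a b : L, μ p ≤ a ⊔ b →
        HasSubdivision (fun u v => μ (u, v) ≤ a ∨ μ (u, v) ≤ b) p.1 p.2) ↔
      ∀ a b : L, dualMap (JnS n) μ (a ⊔ b) = clS (dualMap (JnS n) μ a ∪ dualMap (JnS n) μ b) := by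
  refine ⟨fun hV a b => ?_, fun hsup p hp a b hab => ?_⟩
  · refine le_antisymm (fun p hp => ?_) ?_
    · exact (hasSubdivision_union_iff hp.1 a b).1 (hV p hp.1 a b hp.2)
    · exact clS_subset_of_subset (htr _)
        (Set.union_subset (dualMap_mono le_sup_left) (dualMap_mono le_sup_right))
  · exact (hasSubdivision_union_iff hp a b).2 (hsup a b ▸ ⟨hp, hab⟩)

end VCondition

theorem stmt19_general (n : ℕ) (U : Set ℕ)
    (L : Type*) [Lattice L] [OrderBot L]
    (μ : ℕ × ℕ → L) (φ : L → Set (ℕ × ℕ))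
    (hφ : ∀ a : L, AUset n U (φ a))
    (hdual : ∀ p ∈ JnS n, ∀ a : L, p ∈ φ a ↔ μ p ≤ a) :
    ((∀ c : L, ∃ S : Finset (ℕ × ℕ), ↑S ⊆ JnS n ∧ c = S.sup μ) ↔
        Function.Injective φ) ∧
    ((∀ p ∈ JnS n, ∀ a b : L, μ p ≤ a ⊔ b →
        ∃ (m : ℕ) (z : ℕ → ℕ), 0 < m ∧ z 0 = p.1 ∧ z m = p.2 ∧
          (∀ i < m, z i < z (i + 1)) ∧
          (∀ i < m, μ (z i, z (i + 1)) ≤ a ∨ μ (z i, z (i + 1)) ≤ b)) ↔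
      (∀ a b : L, φ (a ⊓ b) = φ a ∩ φ b ∧ φ (a ⊔ b) = clS (φ a ∪ φ b))) := by
  obtain rfl : φ = dualMap (JnS n) μ := eq_dualMap (fun a => (hφ a).1.1) hdual
  refine ⟨(dualMap_injective_iff (JnS_finite n)).symm, ?_⟩
  simp only [dualMap_inf, true_and]
  exact vCondition_iff_dualMap_sup_eq fun a => (hφ a).2

/-- Let `U ⊆ [n]`, `L` a finite lattice, and let `μ : J_n → L` and
`φ : L → A_U(n)` be dual, i.e. `(x,y) ∈ φ a ↔ μ (x,y) ≤ a`.  Then: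
(i) the range of `μ` generates `L` as a `(∨,0)`-semilattice iff `φ` is injective;
(ii) `μ` satisfies the V-condition (every refinement problem `μ (x,y) ≤ a ∨ b` can
be solved by a subdivision) iff `φ` is a lattice homomorphism (meets of `A_U(n)`
being intersections and joins being transitive closures of unions). -/
theorem stmt19 (n : ℕ) (U : Set ℕ) (hUn : U ⊆ Set.Icc 1 n)
    (L : Type*) [Lattice L] [Fintype L] [OrderBot L]
    (μ : ℕ × ℕ → L) (φ : L → Set (ℕ × ℕ))
    (hφ : ∀ a : L, AUset n U (φ a))
    (hdual : ∀ p ∈ JnS n, ∀ a : L, p ∈ φ a ↔ μ p ≤ a) :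
    ((∀ c : L, ∃ S : Finset (ℕ × ℕ), ↑S ⊆ JnS n ∧ c = S.sup μ) ↔
        Function.Injective φ) ∧
    ((∀ p ∈ JnS n, ∀ a b : L, μ p ≤ a ⊔ b →
        ∃ (m : ℕ) (z : ℕ → ℕ), 0 < m ∧ z 0 = p.1 ∧ z m = p.2 ∧
          (∀ i < m, z i < z (i + 1)) ∧
          (∀ i < m, μ (z i, z (i + 1)) ≤ a ∨ μ (z i, z (i + 1)) ≤ b)) ↔
      (∀ a b : L, φ (a ⊓ b) = φ a ∩ φ b ∧ φ (a ⊔ b) = clS (φ a ∪ φ b))) :=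
  stmt19_general n U L μ φ hφ hdual
end
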